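/- arXiv:0705.1610 — 3 statements merged into one kernel-verified Lean document; each statement's English description precedes it below -/
import Mathlib

section
/- Let p : X̃ → X be a finite covering map between compact metric spaces, and let f : X → X and f̃ : X̃ → X̃ be continuous maps satisfying p ∘ f̃ = f ∘ p (i.e. (f̃, f) is a map of the covering). Then the topological entropies coincide: h(f) = h(f̃). -/
/-- A continuous surjection `p : E → X` is a *finite covering map* if every point of `X`
has an open neighborhood `U` whose preimage under `p` is a disjoint union of finitely many
open sets, each of which is mapped homeomorphically onto `U` by `p`. -/
def IsFiniteCoveringMap {E X : Type*} [TopologicalSpace E] [TopologicalSpace X]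
    (p : E → X) : Prop :=
  Continuous p ∧ Function.Surjective p ∧
    ∀ x : X, ∃ U : Set X, IsOpen U ∧ x ∈ U ∧
      ∃ (ι : Type) (_ : Finite ι) (V : ι → Set E),
        p ⁻¹' U = ⋃ i, V i ∧ Pairwise (Function.onFun Disjoint V) ∧
        ∀ i, IsOpen (V i) ∧ ∃ e : (V i) ≃ₜ U, ∀ v : V i, (e v : X) = p (v : E)

section Auxiliary

open Dynamics Set Metric Uniformity UniformSpace Filter Function ENNReal EReal

/-- Local injectivity of a finite covering map. -/
private lemma locInj' {E X : Type*} [MetricSpace E] [TopologicalSpace X]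
    (p : E → X)
    (hp : ∀ x : X, ∃ U : Set X, IsOpen U ∧ x ∈ U ∧
      ∃ (ι : Type) (_ : Finite ι) (V : ι → Set E),
        p ⁻¹' U = ⋃ i, V i ∧ Pairwise (Function.onFun Disjoint V) ∧
        ∀ i, IsOpen (V i) ∧ ∃ e : (V i) ≃ₜ U, ∀ v : V i, (e v : X) = p (v : E))
    (e : E) : ∃ r > 0, ∀ a b : E, dist a e < r → dist b e < r → p a = p b → a = b := by
  obtain ⟨U, -, hxU, ι, hι, V, hpre, -, hV⟩ := hp (p e)
  have he : e ∈ ⋃ i, V i := hpre ▸ (by simpa using hxU)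
  obtain ⟨i, hei⟩ := mem_iUnion.1 he
  obtain ⟨hVopen, ho, hoc⟩ := hV i
  obtain ⟨r, hr, hball⟩ := Metric.isOpen_iff.1 hVopen e hei
  refine ⟨r, hr, fun a b ha hb hab => ?_⟩
  have haV : a ∈ V i := hball (Metric.mem_ball.2 ha)
  have hbV : b ∈ V i := hball (Metric.mem_ball.2 hb)
  have : ho ⟨a, haV⟩ = ho ⟨b, hbV⟩ := by
    apply Subtype.ext
    rw [hoc ⟨a, haV⟩, hoc ⟨b, hbV⟩]
    exact hab
  have := ho.injective this
  exact congrArg Subtype.val this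

/-- Uniform injectivity radius for a locally injective map on a compact space. -/
private lemma fiberSep' {E X : Type*} [MetricSpace E] [CompactSpace E] [TopologicalSpace X]
    (p : E → X) [Nonempty E]
    (hloc : ∀ e : E, ∃ r > 0, ∀ a b : E, dist a e < r → dist b e < r → p a = p b → a = b) :
    ∃ ε0 > 0, ∀ a b : E, p a = p b → dist a b ≤ ε0 → a = b := by
  choose r hr hinj using hloc
  obtain ⟨t, ht⟩ := isCompact_univ.elim_finite_subcover (fun e : E => Metric.ball e (r e / 2))
    (fun e => Metric.isOpen_ball) (fun e _ => mem_iUnion.2 ⟨e, Metric.mem_ball_self (by linarith [hr e])⟩)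
  have htne : t.Nonempty := by
    rcases (inferInstance : Nonempty E) with ⟨e⟩
    rcases mem_iUnion₂.1 (ht (mem_univ e)) with ⟨c, hc, -⟩
    exact ⟨c, hc⟩
  refine ⟨t.inf' htne (fun e => r e / 2), ?_, fun a b hab hd => ?_⟩
  · exact (Finset.lt_inf'_iff htne).2 fun e _ => by linarith [hr e]
  · rcases mem_iUnion₂.1 (ht (mem_univ a)) with ⟨c, hc, hac⟩
    rw [Metric.mem_ball] at hac
    have h1 : t.inf' htne (fun e => r e / 2) ≤ r c / 2 := Finset.inf'_le _ hc
    have hbc : dist b c < r c := by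
      calc dist b c ≤ dist b a + dist a c := dist_triangle b a c
      _ < r c := by rw [dist_comm b a]; linarith
    exact hinj c a b (by linarith [hr c]) hbc hab

/-- The dichotomy: two points whose images are very close are either very close
or far apart. -/
private lemma dichotomy' {E X : Type*} [MetricSpace E] [CompactSpace E] [MetricSpace X]
    (p : E → X) (hpc : Continuous p) {ε0 : ℝ}
    (hsep : ∀ a b : E, p a = p b → dist a b ≤ ε0 → a = b)
    {ε : ℝ} (hε : 0 < ε) :
    ∃ δ > 0, ∀ a b : E, dist (p a) (p b) < δ → dist a b < ε ∨ ε0 < dist a b := by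
  set C : Set (E × E) := {q | ε ≤ dist q.1 q.2 ∧ dist q.1 q.2 ≤ ε0} with hC
  have hCclosed : IsClosed C := by
    have hd : Continuous fun q : E × E => dist q.1 q.2 := by fun_prop
    exact (isClosed_le continuous_const hd).inter (isClosed_le hd continuous_const)
  have hCcomp : IsCompact C := hCclosed.isCompact
  rcases C.eq_empty_or_nonempty with hCe | hCne
  · refine ⟨1, one_pos, fun a b _ => ?_⟩
    by_contra h
    push_neg at h
    exact (eq_empty_iff_forall_notMem.1 hCe (a, b)) ⟨h.1, h.2⟩
  · obtain ⟨q0, hq0C, hq0min⟩ := hCcomp.exists_isMinOn hCne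
      (Continuous.continuousOn (by fun_prop : Continuous fun q : E × E => dist (p q.1) (p q.2)))
    have hq0pos : 0 < dist (p q0.1) (p q0.2) := by
      rcases lt_or_eq_of_le (dist_nonneg : (0:ℝ) ≤ dist (p q0.1) (p q0.2)) with h | h
      · exact h
      · exfalso
        have : p q0.1 = p q0.2 := by rwa [eq_comm, dist_eq_zero] at h
        have := hsep q0.1 q0.2 this hq0C.2
        have : dist q0.1 q0.2 = 0 := by rw [this, dist_self]
        linarith [hq0C.1]
    refine ⟨dist (p q0.1) (p q0.2), hq0pos, fun a b hd => ?_⟩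
    by_contra h
    push_neg at h
    exact absurd (hq0min (⟨h.1, h.2⟩ : (a, b) ∈ C)) (not_le.2 hd)

/-- Uniform bound on cardinality of `ε0`-separated finite sets in a compact metric space. -/
private lemma sepBound' {E : Type*} [MetricSpace E] [CompactSpace E] {ε0 : ℝ} (hε0 : 0 < ε0) :
    ∃ M : ℕ, 1 ≤ M ∧ ∀ Q : Finset E,
      (∀ a ∈ Q, ∀ b ∈ Q, a ≠ b → ε0 < dist a b) → Q.card ≤ M := by
  obtain ⟨t, -, htfin, ht⟩ := finite_cover_balls_of_compact (X := E) isCompact_univ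
    (show 0 < ε0 / 2 by linarith)
  refine ⟨htfin.toFinset.card + 1, le_add_self, fun Q hQ => ?_⟩
  have : Q.card ≤ htfin.toFinset.card := by
    choose c hct hc using fun (a : E) => mem_iUnion₂.1 (ht (mem_univ a))
    apply Finset.card_le_card_of_injOn c (fun a _ => htfin.mem_toFinset.2 (hct a))
    intro a ha b hb hcab
    by_contra hne
    have h1 : dist a b < ε0 := by
      have h2 := Metric.mem_ball.1 (hc a)
      have h3 := Metric.mem_ball.1 (hc b)
      calc dist a b ≤ dist a (c a) + dist (c a) b := dist_triangle _ _ _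
      _ = dist a (c a) + dist b (c a) := by rw [dist_comm (c a) b, hcab]
      _ < ε0 := by rw [hcab] at h2 ⊢; linarith
    exact absurd (hQ a ha b hb hne) (not_lt.2 h1.le)
  omega

/-- Existence of maximal separated subsets. -/
private lemma exists_max_sep' {E : Type*} [MetricSpace E] {ε0 : ℝ} (hε0 : 0 < ε0) {M : ℕ}
    (hM : ∀ Q : Finset E, (∀ a ∈ Q, ∀ b ∈ Q, a ≠ b → ε0 < dist a b) → Q.card ≤ M)
    (P : Set E) :
    ∃ Q : Finset E, ↑Q ⊆ P ∧ Q.card ≤ M ∧ ∀ e' ∈ P, ∃ e ∈ Q, dist e e' ≤ ε0 := by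
  classical
  set S : Set ℕ := {m | ∃ Q : Finset E, ↑Q ⊆ P ∧
    (∀ a ∈ Q, ∀ b ∈ Q, a ≠ b → ε0 < dist a b) ∧ Q.card = m} with hS
  have h0 : 0 ∈ S := ⟨∅, by simp⟩
  have hbdd : BddAbove S := ⟨M, fun m ⟨Q, _, hsep, hcard⟩ => hcard ▸ hM Q hsep⟩
  obtain ⟨Q, hQP, hQsep, hQcard⟩ := Nat.sSup_mem ⟨0, h0⟩ hbdd
  refine ⟨Q, hQP, hQcard ▸ hM Q hQsep, fun e' he' => ?_⟩
  by_contra h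
  push_neg at h
  have he'Q : e' ∉ Q := fun hmem => by
    have := h e' hmem
    simp [dist_self] at this
    linarith
  have hins : (insert e' Q).card ∈ S := by
    refine ⟨insert e' Q, ?_, ?_, rfl⟩
    · intro a ha
      rcases Finset.mem_insert.1 (by exact_mod_cast ha) with rfl | haQ
      · exact he'
      · exact hQP haQ
    · intro a ha b hb hab
      rcases Finset.mem_insert.1 ha with rfl | haQ
      · rcases Finset.mem_insert.1 hb with rfl | hbQ
        · exact absurd rfl hab
        · rw [dist_comm]; exact h b hbQ
      · rcases Finset.mem_insert.1 hb with rfl | hbQ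
        · exact h a haQ
        · exact hQsep a haQ b hbQ hab
  have := le_csSup hbdd hins
  rw [Finset.card_insert_of_notMem he'Q, hQcard] at this
  omega

/-- Bound on the minimal cardinality of dynamical covers upstairs in terms of
dynamical covers downstairs. -/
private lemma entourage_step' {E X : Type*} [MetricSpace E] [MetricSpace X]
    (p : E → X) (f : X → X) (flift : E → E) (hcomm : Function.Semiconj p flift f)
    {ε0 ε1 δ : ℝ}
    (hlip : ∀ a b : E, dist a b < ε1 → dist (flift a) (flift b) < ε0)
    (hdich : ∀ a b : E, dist (p a) (p b) < δ → dist a b < ε1 ∨ ε0 < dist a b)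
    {M : ℕ} (hM1 : 1 ≤ M)
    (hM : ∀ Q : Finset E, (∀ a ∈ Q, ∀ b ∈ Q, a ≠ b → ε0 < dist a b) → Q.card ≤ M)
    (hε0 : 0 < ε0) (n : ℕ) :
    coverMincard flift univ {q : E × E | dist q.1 q.2 < ε1} n ≤
      (M : ℕ∞) * coverMincard f univ {q : X × X | dist q.1 q.2 < δ/2} n := by
  classical
  set U : Set (E × E) := {q : E × E | dist q.1 q.2 < ε1} with hU
  set V : Set (X × X) := {q : X × X | dist q.1 q.2 < δ/2} with hV
  rcases eq_top_or_lt_top (coverMincard f univ V n) with htop | hfin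
  · rw [htop, ENat.mul_top (by exact_mod_cast Nat.one_le_iff_ne_zero.1 hM1)]
    exact le_top
  obtain ⟨t, tcov, tcard⟩ := (coverMincard_finite_iff f univ V n).1 hfin
  -- distance control on the base for pairs over the same dynamical ball
  have hbase : ∀ (x : X) (a : E), p a ∈ ball x (dynEntourage f V n) →
      ∀ j < n, dist (f^[j] x) (p (flift^[j] a)) < δ/2 := by
    intro x a ha j hj
    have := (mem_ball_dynEntourage.1 ha) j hj
    rw [(hcomm.iterate_right j).eq a]
    exact this
  -- propagation of closeness
  have prop : ∀ (x : X) (a b : E), p a ∈ ball x (dynEntourage f V n) →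
      p b ∈ ball x (dynEntourage f V n) → dist a b ≤ ε0 →
      ∀ j, j < n → dist (flift^[j] a) (flift^[j] b) < ε1 := by
    intro x a b ha hb hab j
    induction j with
    | zero =>
      intro hj
      have hd : dist (p (flift^[0] a)) (p (flift^[0] b)) < δ := by
        have h1 := hbase x a ha 0 hj
        have h2 := hbase x b hb 0 hj
        calc dist (p (flift^[0] a)) (p (flift^[0] b))
            ≤ dist (p (flift^[0] a)) (f^[0] x) + dist (f^[0] x) (p (flift^[0] b)) :=
              dist_triangle _ _ _
          _ < δ := by rw [dist_comm (p (flift^[0] a))] at *; linarith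
      rcases hdich _ _ hd with h | h
      · exact h
      · simp only [Function.iterate_zero, id_eq] at h
        linarith
    | succ j ih =>
      intro hj
      have hj' : j < n := Nat.lt_of_succ_lt hj
      have hprev : dist (flift^[j] a) (flift^[j] b) < ε1 := ih hj'
      have hd : dist (p (flift^[j+1] a)) (p (flift^[j+1] b)) < δ := by
        have h1 := hbase x a ha (j+1) hj
        have h2 := hbase x b hb (j+1) hj
        calc dist (p (flift^[j+1] a)) (p (flift^[j+1] b))
            ≤ dist (p (flift^[j+1] a)) (f^[j+1] x) + dist (f^[j+1] x) (p (flift^[j+1] b)) :=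
              dist_triangle _ _ _
          _ < δ := by rw [dist_comm (p (flift^[j+1] a))] at *; linarith
      rcases hdich _ _ hd with h | h
      · exact h
      · exfalso
        have := hlip _ _ hprev
        rw [← Function.iterate_succ_apply' flift j a, ← Function.iterate_succ_apply' flift j b]
          at this
        linarith
  -- choose maximal separated sets in the preimages of dynamical balls
  have hmaxsep : ∀ x : X, ∃ Q : Finset E,
      ↑Q ⊆ p ⁻¹' (ball x (dynEntourage f V n)) ∧ Q.card ≤ M ∧
      ∀ e' ∈ p ⁻¹' (ball x (dynEntourage f V n)), ∃ e ∈ Q, dist e e' ≤ ε0 :=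
    fun x => exists_max_sep' hε0 hM _
  choose Q hQsub hQcard hQnear using hmaxsep
  set s' : Finset E := t.biUnion Q with hs'
  have hcover : IsDynCoverOf flift univ U n ↑s' := by
    intro e' _
    obtain ⟨x, hx, hex0⟩ := tcov (mem_univ (p e'))
    have hex : p e' ∈ ball x (dynEntourage f V n) := mem_dynEntourage.2 fun k hk => by
      have := mem_dynEntourage.1 hex0 k hk
      simp only [hV, mem_setOf_eq] at this ⊢
      rw [dist_comm]; exact this
    obtain ⟨e, heQ, hee'⟩ := hQnear x e' hex
    have hpe : p e ∈ ball x (dynEntourage f V n) := hQsub x heQ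
    refine ⟨e, ?_, ?_⟩
    · exact_mod_cast Finset.mem_biUnion.2 ⟨x, hx, heQ⟩
    · show (e', e) ∈ dynEntourage flift U n
      exact mem_dynEntourage.2 fun k hk => by
        have := prop x e e' hpe hex hee' k hk
        simp only [hU, mem_setOf_eq]
        rw [dist_comm]; exact this
  have hcard : s'.card ≤ t.card * M := by
    apply (Finset.card_biUnion_le).trans
    calc ∑ x ∈ t, (Q x).card ≤ ∑ _x ∈ t, M := Finset.sum_le_sum fun x _ => hQcard x
      _ = t.card * M := by rw [Finset.sum_const, smul_eq_mul]
  calc coverMincard flift univ U n ≤ (s'.card : ℕ∞) := hcover.coverMincard_le_card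
    _ ≤ ((t.card * M : ℕ) : ℕ∞) := by exact_mod_cast hcard
    _ = (M : ℕ∞) * (t.card : ℕ∞) := by rw [Nat.cast_mul, mul_comm]
    _ = (M : ℕ∞) * coverMincard f univ V n := by rw [tcard]

/-- From the cardinality bound to the entropy bound. -/
private lemma entropy_step' {E X : Type*} [UniformSpace E] [UniformSpace X]
    (f : X → X) (flift : E → E) [Nonempty X]
    {U : Set (E × E)} {V : Set (X × X)} {M : ℕ} (hM1 : 1 ≤ M)
    (hcount : ∀ n : ℕ, coverMincard flift univ U n ≤ (M : ℕ∞) * coverMincard f univ V n) :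
    coverEntropyEntourage flift univ U ≤ coverEntropyEntourage f univ V := by
  have hlogM_nonneg : (0 : EReal) ≤ log ((M : ℕ∞) : ℝ≥0∞) := by
    rw [zero_le_log_iff]
    exact_mod_cast hM1
  have hlogM_netop : log ((M : ℕ∞) : ℝ≥0∞) ≠ ⊤ := by
    apply ne_top_of_lt
    rw [log_lt_top_iff, ENat.toENNReal_coe]
    exact ENNReal.natCast_lt_top M
  set u : ℕ → EReal := fun n => log ((M : ℕ∞) : ℝ≥0∞) / n with hu
  set v : ℕ → EReal := fun n => log (coverMincard f univ V n) / n with hv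
  have key : ∀ n : ℕ, log (coverMincard flift univ U n) / n ≤ u n + v n := by
    intro n
    have h1 : log (coverMincard flift univ U n) ≤
        log ((M : ℕ∞) : ℝ≥0∞) + log (coverMincard f univ V n) := by
      rw [← log_mul_add]
      apply log_monotone
      calc ((coverMincard flift univ U n : ℕ∞) : ℝ≥0∞)
          ≤ (((M : ℕ∞) * coverMincard f univ V n : ℕ∞) : ℝ≥0∞) :=
            ENat.toENNReal_mono (hcount n)
        _ = ((M : ℕ∞) : ℝ≥0∞) * ((coverMincard f univ V n : ℕ∞) : ℝ≥0∞) := by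
            rw [ENat.toENNReal_mul]
    calc log (coverMincard flift univ U n) / n
        ≤ (log ((M : ℕ∞) : ℝ≥0∞) + log (coverMincard f univ V n)) / n :=
          EReal.div_le_div_right_of_nonneg (Nat.cast_nonneg' n) h1
      _ = u n + v n := EReal.div_right_distrib_of_nonneg hlogM_nonneg
          (by rw [zero_le_log_iff]; exact_mod_cast (one_le_coverMincard_iff f univ V n).2 univ_nonempty)
  apply (limsup_le_limsup (Eventually.of_forall key)).trans
  have hulim : atTop.limsup u = 0 :=
    Tendsto.limsup_eq (EReal.tendsto_const_div_atTop_nhds_zero_nat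
      (ne_bot_of_le_ne_bot (by simp) hlogM_nonneg) hlogM_netop)
  have := @limsup_add_le ℕ atTop u v (Or.inl (hulim ▸ EReal.zero_ne_bot))
    (Or.inl (hulim ▸ EReal.zero_ne_top))
  rw [hulim, zero_add] at this
  exact this

end Auxiliary

open Dynamics Set Metric Uniformity UniformSpace Filter Function

/-- Let `p : E → X` be a finite covering map between compact metric
spaces and let `f : X → X`, `f̃ : E → E` be continuous maps with `p ∘ f̃ = f ∘ p`.
Then the topological entropies of `f` and `f̃` coincide. -/
theorem coverEntropy_eq_of_finiteCoveringMap {E X : Type*}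
    [MetricSpace E] [CompactSpace E] [MetricSpace X] [CompactSpace X]
    (p : E → X) (hp : IsFiniteCoveringMap p)
    (f : X → X) (hf : Continuous f) (flift : E → E) (hflift : Continuous flift)
    (hcomm : p ∘ flift = f ∘ p) :
    Dynamics.coverEntropy f Set.univ = Dynamics.coverEntropy flift Set.univ := by
  rcases isEmpty_or_nonempty E with hE | hE
  · have hX : IsEmpty X := ⟨fun x => (hp.2.1 x).elim fun e _ => hE.false e⟩
    have h1 : (univ : Set X) = ∅ := univ_eq_empty_iff.2 hX
    have h2 : (univ : Set E) = ∅ := univ_eq_empty_iff.2 hE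
    rw [h1, h2, Dynamics.coverEntropy_empty, Dynamics.coverEntropy_empty]
  · haveI : Nonempty E := hE
    haveI : Nonempty X := ⟨p (Classical.arbitrary E)⟩
    have hsemi : Function.Semiconj p flift f := fun e => congrFun hcomm e
    have hpu : UniformContinuous p := CompactSpace.uniformContinuous_of_continuous hp.1
    apply le_antisymm
    · have h1 := Dynamics.coverEntropy_image_le_of_uniformContinuous hsemi hpu univ
      rwa [Set.image_univ, hp.2.1.range_eq] at h1
    · -- hard direction: `h(f̃) ≤ h(f)`
      obtain ⟨ε0, hε0, hsep⟩ := fiberSep' (E := E) (X := X) p (fun e => locInj' (E := E) (X := X) p hp.2.2 e)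
      obtain ⟨M, hM1, hM⟩ := sepBound' (E := E) hε0
      rw [Dynamics.coverEntropy_eq_iSup_basis Metric.uniformity_basis_dist flift univ]
      refine iSup₂_le fun ε hε => ?_
      obtain ⟨δc, hδc, hδcprop⟩ := Metric.uniformContinuous_iff.1
        (CompactSpace.uniformContinuous_of_continuous hflift) ε0 hε0
      set ε1 := min ε δc with hε1def
      have hε1 : 0 < ε1 := lt_min hε hδc
      obtain ⟨δ, hδ, hdich⟩ := dichotomy' p hp.1 hsep hε1
      have hlip : ∀ a b : E, dist a b < ε1 → dist (flift a) (flift b) < ε0 :=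
        fun a b h => hδcprop (lt_of_lt_of_le h (min_le_right _ _))
      have hcount := fun n => entourage_step' p f flift hsemi hlip hdich hM1 hM hε0 n
      have hstep := entropy_step' f flift hM1 hcount
      calc coverEntropyEntourage flift univ {q : E × E | dist q.1 q.2 < ε}
          ≤ coverEntropyEntourage flift univ {q : E × E | dist q.1 q.2 < ε1} :=
            coverEntropyEntourage_antitone flift univ
              (fun q hq => by exact lt_of_lt_of_le hq (min_le_left ε δc))
        _ ≤ coverEntropyEntourage f univ {q : X × X | dist q.1 q.2 < δ/2} := hstep
        _ ≤ coverEntropy f univ := coverEntropyEntourage_le_coverEntropy f univ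
            (Metric.dist_mem_uniformity (by linarith))
end

section
/- Let π be a finitely generated group and let Γ be a normal nilpotent subgroup of finite index in π. Then there exists a subgroup Γ′ of π with Γ′ ⊆ Γ such that: Γ′ is normal in π, Γ′ has finite index in π, and Γ′ is fully characteristic, i.e. s(Γ′) ⊆ Γ′ for every group endomorphism s : π → π. -/
/-- If `π` is finitely generated and `P` is finite, there are finitely many
homomorphisms `π →* P`. -/
lemma finite_monoidHom_of_fg {π P : Type*} [Group π] [Group.FG π] [Finite P] [Group P] :
    Finite (π →* P) := by
  obtain ⟨S, hS, hfin⟩ := Group.fg_iff.mp ‹Group.FG π›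
  have : Finite S := hfin
  refine Finite.of_injective (fun f => (fun x : S => f x)) ?_
  intro f g h
  exact MonoidHom.eq_of_eqOn_dense hS fun x hx => congrFun h ⟨x, hx⟩

/-- Let `π` be a finitely generated group and `Γ` a normal nilpotent
subgroup of finite index in `π`. Then there is a subgroup `Γ' ≤ Γ` which is normal and of
finite index in `π` and fully characteristic: `s(Γ') ⊆ Γ'` for every endomorphism `s` of `π`. -/
theorem exists_fully_characteristic_nilpotent_subgroup {π : Type*} [Group π] [Group.FG π]
    (Γ : Subgroup π) [Γ.Normal] [Γ.FiniteIndex] (hnil : Group.IsNilpotent Γ) :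
    ∃ Γ' : Subgroup π, Γ' ≤ Γ ∧ Γ'.Normal ∧ Γ'.FiniteIndex ∧
      ∀ s : π →* π, Γ'.map s ≤ Γ' := by
  classical
  have hQ : Finite (π ⧸ Γ) := Subgroup.finite_quotient_of_finiteIndex
  set P := Equiv.Perm (π ⧸ Γ)
  have hP : Finite P := by infer_instance
  have hfin : Finite (π →* P) := finite_monoidHom_of_fg
  refine ⟨⨅ f : π →* P, f.ker, ?_, ?_, ?_, ?_⟩
  · refine le_trans (iInf_le _ (MulAction.toPermHom π (π ⧸ Γ))) ?_
    rw [← Subgroup.normalCore_eq_ker]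
    exact Γ.normalCore_le
  · constructor
    intro x hx g
    simp only [Subgroup.mem_iInf] at hx ⊢
    exact fun f => (f.normal_ker).conj_mem x (hx f) g
  · exact Subgroup.finiteIndex_iInf fun f => Subgroup.finiteIndex_ker f
  · intro s y hy
    obtain ⟨x, hx, rfl⟩ := hy
    refine Subgroup.mem_iInf.mpr fun f => ?_
    exact Subgroup.mem_iInf.mp hx (f.comp s)
end

section
/- Let Γ be a finitely generated nilpotent group and let k be a positive integer. Then the subgroup Γ(k) of Γ generated by the set of k-th powers {x^k : x ∈ Γ} has finite index in Γ. -/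
universe u

/-- A finitely generated nilpotent torsion group is finite. -/
theorem finite_of_fg_nilpotent_torsion :
    ∀ (n : ℕ) (G : Type u) [Group G] [Group.IsNilpotent G], Group.nilpotencyClass G ≤ n →
      Group.FG G → Monoid.IsTorsion G → Finite G := by
  intro n
  induction n with
  | zero =>
    intro G _ _ hc _ _
    have : Subsingleton G := nilpotencyClass_zero_iff_subsingleton.mp (Nat.le_zero.mp hc)
    exact Finite.of_subsingleton
  | succ n ih =>
    intro G _ _ hc hfg htor
    cases subsingleton_or_nontrivial G with
    | inl h => exact Finite.of_subsingleton
    | inr h =>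
      have hQfg : Group.FG (G ⧸ Subgroup.center G) := inferInstance
      have hQtor : Monoid.IsTorsion (G ⧸ Subgroup.center G) :=
        IsTorsion.of_surjective (QuotientGroup.mk'_surjective (Subgroup.center G)) htor
      have hQc : Group.nilpotencyClass (G ⧸ Subgroup.center G) ≤ n := by
        have := nilpotencyClass_eq_quotient_center_plus_one (G := G)
        omega
      have hQfin : Finite (G ⧸ Subgroup.center G) := ih _ hQc hQfg hQtor
      have : (Subgroup.center G).FiniteIndex := ⟨Subgroup.index_ne_zero_of_finite⟩
      have : Group.FG (Subgroup.center G) := Subgroup.fg_of_index_ne_zero _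
      have hZfin : Finite (Subgroup.center G) :=
        by open IsMulCommutative in exact CommGroup.finite_of_fg_torsion _ (IsTorsion.subgroup htor _)
      exact Finite.of_equiv _ (Subgroup.groupEquivQuotientProdSubgroup (s := Subgroup.center G)).symm

/-- If `Γ` is a finitely generated nilpotent group and `k` is a positive
integer, then the subgroup generated by the `k`-th powers `{x ^ k : x ∈ Γ}` has finite
index in `Γ`. -/
theorem finiteIndex_closure_pow {Γ : Type*} [Group Γ] [Group.FG Γ] [Group.IsNilpotent Γ]
    (k : ℕ) (hk : 0 < k) :
    (Subgroup.closure (Set.range fun x : Γ => x ^ k)).FiniteIndex := by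
  set N := Subgroup.closure (Set.range fun x : Γ => x ^ k) with hN
  have hnormal : N.Normal := by
    rw [hN]
    have h_base : (Set.range fun x : Γ => x ^ k) =
        Group.conjugatesOfSet (Set.range fun x : Γ => x ^ k) := by
      refine Set.Subset.antisymm Group.subset_conjugatesOfSet fun a h => ?_
      simp_rw [Group.mem_conjugatesOfSet_iff, isConj_iff] at h
      obtain ⟨b, ⟨z, rfl⟩, c, rfl⟩ := h
      refine ⟨c * z * c⁻¹, ?_⟩
      show (c * z * c⁻¹) ^ k = c * z ^ k * c⁻¹
      exact conj_pow
    rw [h_base]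
    exact Subgroup.normalClosure_normal
  have htor : Monoid.IsTorsion (Γ ⧸ N) := by
    intro q
    obtain ⟨x, rfl⟩ := QuotientGroup.mk_surjective q
    refine isOfFinOrder_iff_pow_eq_one.mpr ⟨k, hk, ?_⟩
    rw [← QuotientGroup.mk_pow]
    exact (QuotientGroup.eq_one_iff _).mpr (Subgroup.subset_closure ⟨x, rfl⟩)
  have : Finite (Γ ⧸ N) :=
    finite_of_fg_nilpotent_torsion (Group.nilpotencyClass (Γ ⧸ N)) (Γ ⧸ N) le_rfl inferInstance htor
  exact ⟨Subgroup.index_ne_zero_of_finite⟩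
end
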